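/- (Quantitative form of Corollary on small-centrality sources.) Let W be an n×n row-stochastic, irreducible, aperiodic matrix with stationary distribution π and mean first passage time matrix (m_{ij}), satisfying rational selfishness at node r, and let θ ∈ (0,1). Let W̃ be the single-edge perturbation of W by edge (r,c) with weight θ, assumed irreducible and aperiodic, with stationary distribution π̃. Then for every state j, |π̃_j − π_j| ≤ π_r · π_j · (θ/(1−θ)) · |m_{cj}·(1 − δ{j=c}) − m_{rj} + 1|. In particular, the perturbation of the stationary distribution vanishes as the centrality π_r of the edge's source tends to 0 (with the mean first passage times bounded). -/

import Mathlib

open Matrix Finset Filter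

/-- `W` is row-stochastic: nonnegative entries, each row sums to 1. -/
def RowStochastic {n : ℕ} (W : Matrix (Fin n) (Fin n) ℝ) : Prop :=
  (∀ i j, 0 ≤ W i j) ∧ ∀ i, ∑ j, W i j = 1

/-- `W` is irreducible and aperiodic, i.e. primitive: some power has all entries positive. -/
def Primitive {n : ℕ} (W : Matrix (Fin n) (Fin n) ℝ) : Prop :=
  ∃ N : ℕ, ∀ i j, 0 < (W ^ N) i j

/-- `π` is the stationary distribution of `W`: positive entries, summing to 1, `πᵀ W = πᵀ`. -/
def IsStationaryDist {n : ℕ} (W : Matrix (Fin n) (Fin n) ℝ) (π : Fin n → ℝ) : Prop :=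
  (∀ i, 0 < π i) ∧ (∑ i, π i = 1) ∧ π ᵥ* W = π

/-- `M` is a mean first passage time matrix of `W`: positive entries satisfying the
one-hop conditioning equations `m i j = 1 + ∑_{k ≠ j} w i k * m k j`. -/
def IsMFPT {n : ℕ} (W M : Matrix (Fin n) (Fin n) ℝ) : Prop :=
  (∀ i j, 0 < M i j) ∧ ∀ i j, M i j = 1 + ∑ k, if k ≠ j then W i k * M k j else 0

/-- The single-edge perturbation `W̃ = W − θ·diag(e r)·W + θ·(e r)(e c)ᵀ` of `W` by the
directed edge `(r, c)` with weight `θ`: row `r` of `W` is multiplied by `1 − θ` and `θ`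
is added in entry `(r, c)`. -/
def EdgePerturb {n : ℕ} (W : Matrix (Fin n) (Fin n) ℝ) (r c : Fin n) (θ : ℝ) :
    Matrix (Fin n) (Fin n) ℝ :=
  Matrix.of fun i j => if i = r then (1 - θ) * W i j + (if j = c then θ else 0) else W i j

/-! Put `u = π' - π`. Stationarity of `π'` for `W + θ e_r (e_c - W r)ᵀ` gives
`u - u W = q := θ π'_r (e_c - W r)` with `∑ u = 0`. The one-hop equations say
`(I - W) M = J - W diag(M)`, so `M` inverts `I - W` on zero-sum vectors up to the diagonal, and
Kac's formula `π_j m_jj = 1` removes the diagonal: `u_j = q_j - π_j (q M)_j`. Expanding `q M`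
gives the exact formula `π'_j - π_j = -θ π'_r π_j (m_cj (1 - δ_jc) - m_rj + 1)`; at `j = r` it
yields `π'_r (1 - θ) ≤ π_r`, which turns the formula into the bound. -/

theorem vecMul_edgePerturb {n : ℕ} (W : Matrix (Fin n) (Fin n) ℝ) (r c : Fin n) (θ : ℝ)
    (x : Fin n → ℝ) :
    x ᵥ* EdgePerturb W r c θ = x ᵥ* W + (θ * x r) • (Pi.single c 1 - W r) := by
  ext j
  have hterm : ∀ i, x i * EdgePerturb W r c θ i j
      = x i * W i j + if i = r then θ * x r * ((Pi.single c 1 : Fin n → ℝ) j - W r j) else 0 := by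
    intro i
    simp only [EdgePerturb, of_apply, Pi.single_apply]
    split_ifs <;> subst_vars <;> ring
  simp only [vecMul, dotProduct, hterm, sum_add_distrib, sum_ite_eq', mem_univ, if_true,
    Pi.add_apply, Pi.smul_apply, Pi.sub_apply, smul_eq_mul]

namespace IsMFPT

variable {n : ℕ} {W M : Matrix (Fin n) (Fin n) ℝ} {π π' : Fin n → ℝ}

theorem mul_apply (hM : IsMFPT W M) (i j : Fin n) :
    (W * M) i j = M i j - 1 + W i j * M j j := by
  have h := hM.2 i j
  rw [← sum_filter, filter_ne', sum_erase_eq_sub (mem_univ j)] at h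
  rw [Matrix.mul_apply]
  linarith

theorem vecMul_vecMul_apply (hM : IsMFPT W M) (x : Fin n → ℝ) (j : Fin n) :
    (x ᵥ* W ᵥ* M) j = (x ᵥ* M) j - ∑ i, x i + (x ᵥ* W) j * M j j := by
  rw [vecMul_vecMul]
  simp only [vecMul, dotProduct, hM.mul_apply, mul_add, mul_sub, mul_one, sum_add_distrib,
    sum_sub_distrib, sum_mul, mul_assoc]

theorem stationary_mul_apply_self_eq_one (hM : IsMFPT W M) (hπW : π ᵥ* W = π)
    (hπ1 : ∑ i, π i = 1) (j : Fin n) : π j * M j j = 1 := by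
  have h := hM.vecMul_vecMul_apply π j
  rw [hπW, hπ1] at h
  linarith

theorem eq_sub_mul_vecMul (hM : IsMFPT W M) (hπW : π ᵥ* W = π) (hπ1 : ∑ i, π i = 1)
    {u q : Fin n → ℝ} (hu : u - u ᵥ* W = q) (hu0 : ∑ i, u i = 0) (j : Fin n) :
    u j = q j - π j * (q ᵥ* M) j := by
  have h := hM.vecMul_vecMul_apply u j
  rw [hu0, show u ᵥ* W = u - q by rw [← hu]; abel, sub_vecMul] at h
  simp only [Pi.sub_apply] at h
  linear_combination (-π j) * h - (u j - q j) * hM.stationary_mul_apply_self_eq_one hπW hπ1 j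

theorem sub_apply_of_edgePerturb (hM : IsMFPT W M) (hπW : π ᵥ* W = π) (hπ1 : ∑ i, π i = 1)
    {r c : Fin n} {θ : ℝ} (hπ'W : π' ᵥ* EdgePerturb W r c θ = π') (hπ'1 : ∑ i, π' i = 1)
    (j : Fin n) :
    π' j - π j = -(θ * π' r * π j * (M c j * (if j = c then 0 else 1) - M r j + 1)) := by
  set q := (θ * π' r) • (Pi.single c 1 - W r)
  have hu : (π' - π) - (π' - π) ᵥ* W = q := by
    rw [sub_vecMul, hπW]
    nth_rewrite 1 [← hπ'W]
    rw [vecMul_edgePerturb]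
    abel
  have hu0 : ∑ i, (π' - π) i = 0 := by
    simp only [Pi.sub_apply, sum_sub_distrib, hπ1, hπ'1, sub_self]
  have hqM : (q ᵥ* M) j = θ * π' r * (M c j - (W * M) r j) := by
    simp only [q, smul_vecMul, sub_vecMul, single_one_vecMul, Pi.smul_apply, Pi.sub_apply,
      smul_eq_mul]
    rfl
  have h := hM.eq_sub_mul_vecMul hπW hπ1 hu hu0 j
  have hkac := hM.stationary_mul_apply_self_eq_one hπW hπ1 j
  rw [hqM, hM.mul_apply] at h
  simp only [q, Pi.sub_apply, Pi.smul_apply, smul_eq_mul, Pi.single_apply] at h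
  split_ifs at h ⊢ with hjc
  · subst hjc
    linear_combination h - θ * π' r * (1 - W r j) * hkac
  · linear_combination h + θ * π' r * W r j * hkac

theorem source_mul_one_sub_le_of_edgePerturb (hM : IsMFPT W M) (hπ : IsStationaryDist W π)
    {r c : Fin n} {θ : ℝ} (hπ' : IsStationaryDist (EdgePerturb W r c θ) π') (hrc : r ≠ c)
    (hθ : 0 ≤ θ) : π' r * (1 - θ) ≤ π r := by
  have h := hM.sub_apply_of_edgePerturb hπ.2.2 hπ.2.1 hπ'.2.2 hπ'.2.1 r
  rw [if_neg hrc, mul_one] at h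
  have hsource : π' r * (1 - θ) = π r - θ * π' r * π r * (M c r + 1) := by
    linear_combination h + θ * π' r * hM.stationary_mul_apply_self_eq_one hπ.2.2 hπ.2.1 r
  have := hπ'.1 r
  have := hπ.1 r
  have := hM.1 c r
  have : 0 ≤ θ * π' r * π r * (M c r + 1) := by positivity
  linarith

end IsMFPT

theorem stationary_perturbation_bound_general {n : ℕ}
    (W : Matrix (Fin n) (Fin n) ℝ) (π : Fin n → ℝ) (M : Matrix (Fin n) (Fin n) ℝ)
    (hπ : IsStationaryDist W π) (hM : IsMFPT W M)
    (r c : Fin n) (hrc : r ≠ c)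
    (θ : ℝ) (hθ0 : 0 < θ) (hθ1 : θ < 1)
    (π' : Fin n → ℝ)
    (hπ' : IsStationaryDist (EdgePerturb W r c θ) π') :
    ∀ j, |π' j - π j| ≤
      π r * π j * (θ / (1 - θ)) *
        |M c j * (if j = c then 0 else 1) - M r j + 1| := by
  intro j
  have hπj := (hπ.1 j).le
  have hπ'r := (hπ'.1 r).le
  have hcoeff : θ * π' r * π j ≤ π r * π j * (θ / (1 - θ)) :=
    calc θ * π' r * π j = θ / (1 - θ) * (π' r * (1 - θ)) * π j := by
          field_simp [(by linarith : 1 - θ ≠ 0)]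
      _ ≤ θ / (1 - θ) * π r * π j := by
          gcongr
          exact hM.source_mul_one_sub_le_of_edgePerturb hπ hπ' hrc hθ0.le
      _ = π r * π j * (θ / (1 - θ)) := by ring
  rw [hM.sub_apply_of_edgePerturb hπ.2.2 hπ.2.1 hπ'.2.2 hπ'.2.1 j, abs_neg, abs_mul,
    abs_of_nonneg (by positivity)]
  exact mul_le_mul_of_nonneg_right hcoeff (abs_nonneg _)

/-- Quantitative form of the small-centrality-source corollary. -/
theorem stationary_perturbation_bound {n : ℕ}
    (W : Matrix (Fin n) (Fin n) ℝ) (π : Fin n → ℝ) (M : Matrix (Fin n) (Fin n) ℝ)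
    (hW : RowStochastic W) (hprim : Primitive W) (hπ : IsStationaryDist W π) (hM : IsMFPT W M)
    (r c : Fin n) (hrc : r ≠ c) (hWrc : W r c = 0)
    (θ : ℝ) (hθ0 : 0 < θ) (hθ1 : θ < 1)
    (hself : ∀ j, j ≠ r → W r j < W r r)
    (π' : Fin n → ℝ) (hprim' : Primitive (EdgePerturb W r c θ))
    (hπ' : IsStationaryDist (EdgePerturb W r c θ) π') :
    ∀ j, |π' j - π j| ≤
      π r * π j * (θ / (1 - θ)) *
        |M c j * (if j = c then 0 else 1) - M r j + 1| :=
  stationary_perturbation_bound_general W π M hπ hM r c hrc θ hθ0 hθ1 π' hπ'
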